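/- Combining the previous results: let ε satisfy ‖ε(x) − ε(x_adv)‖ ≥ Q with Q > 0, define q_ᾱ(v) = √ᾱ·v + √(1−ᾱ)·ε(v) on ℝ^n with ᾱ ∈ [0,1], and suppose q_ᾱ is Lipschitz with constant L with 0 < L. Let x_adv = x + δ. Then for any vector y with q_ᾱ(y) = q_ᾱ(x_adv), we have ‖x − y‖ ≥ (√(1−ᾱ)·Q − √ᾱ·‖δ‖) / L. -/

import Mathlib

/-!
Lipschitz continuity gives `L‖x - y‖ ≥ ‖q x - q y‖ = ‖q x - q (x + δ)‖`, and
`q x - q (x + δ) = √(1 - a) • (ε x - ε (x + δ)) - √a • δ`, whose norm the reverse triangle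
inequality bounds below by `√(1 - a) Q - √a ‖δ‖`.
-/

section

variable {E : Type*} [NormedAddCommGroup E] [NormedSpace ℝ E]

lemma mul_norm_sub_mul_norm_le_norm_smul_sub_smul {s t : ℝ} (hs : 0 ≤ s) (ht : 0 ≤ t)
    (u v : E) : t * ‖u‖ - s * ‖v‖ ≤ ‖t • u - s • v‖ := by
  simpa only [norm_smul_of_nonneg ht, norm_smul_of_nonneg hs] using norm_sub_norm_le (t • u) (s • v)

lemma smul_add_smul_sub_smul_add_smul (s t : ℝ) (ε : E → E) (x δ : E) :
    (s • x + t • ε x) - (s • (x + δ) + t • ε (x + δ)) = t • (ε x - ε (x + δ)) - s • δ := by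
  rw [smul_add, smul_sub]
  abel

lemma sub_le_norm_smul_add_smul_sub_smul_add_smul {s t Q : ℝ} (hs : 0 ≤ s) (ht : 0 ≤ t)
    (ε : E → E) {x δ : E} (hsep : Q ≤ ‖ε x - ε (x + δ)‖) :
    t * Q - s * ‖δ‖ ≤ ‖(s • x + t • ε x) - (s • (x + δ) + t • ε (x + δ))‖ := by
  calc t * Q - s * ‖δ‖ ≤ t * ‖ε x - ε (x + δ)‖ - s * ‖δ‖ := by gcongr
    _ ≤ ‖t • (ε x - ε (x + δ)) - s • δ‖ := mul_norm_sub_mul_norm_le_norm_smul_sub_smul hs ht _ _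
    _ = _ := by rw [smul_add_smul_sub_smul_add_smul]

end

theorem stmt4_general {n : ℕ} (ε : EuclideanSpace ℝ (Fin n) → EuclideanSpace ℝ (Fin n))
    (x δ y : EuclideanSpace ℝ (Fin n)) (Q a L : ℝ)
    (hL : 0 < L)
    (hsep : ‖ε x - ε (x + δ)‖ ≥ Q)
    (hLip : ∀ u v : EuclideanSpace ℝ (Fin n),
      ‖(Real.sqrt a • u + Real.sqrt (1 - a) • ε u) -
        (Real.sqrt a • v + Real.sqrt (1 - a) • ε v)‖ ≤ L * ‖u - v‖)
    (hy : Real.sqrt a • y + Real.sqrt (1 - a) • ε y =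
      Real.sqrt a • (x + δ) + Real.sqrt (1 - a) • ε (x + δ)) :
    ‖x - y‖ ≥ (Real.sqrt (1 - a) * Q - Real.sqrt a * ‖δ‖) / L := by
  rw [ge_iff_le, div_le_iff₀ hL, mul_comm ‖x - y‖]
  calc Real.sqrt (1 - a) * Q - Real.sqrt a * ‖δ‖
      ≤ ‖(Real.sqrt a • x + Real.sqrt (1 - a) • ε x) -
          (Real.sqrt a • (x + δ) + Real.sqrt (1 - a) • ε (x + δ))‖ :=
        sub_le_norm_smul_add_smul_sub_smul_add_smul (Real.sqrt_nonneg _) (Real.sqrt_nonneg _)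
          ε hsep
    _ ≤ L * ‖x - y‖ := hy ▸ hLip x y

theorem stmt4 {n : ℕ} (ε : EuclideanSpace ℝ (Fin n) → EuclideanSpace ℝ (Fin n))
    (x δ y : EuclideanSpace ℝ (Fin n)) (Q a L : ℝ)
    (hQ : 0 < Q) (ha0 : 0 ≤ a) (ha1 : a ≤ 1) (hL : 0 < L)
    (hsep : ‖ε x - ε (x + δ)‖ ≥ Q)
    (hLip : ∀ u v : EuclideanSpace ℝ (Fin n),
      ‖(Real.sqrt a • u + Real.sqrt (1 - a) • ε u) -
        (Real.sqrt a • v + Real.sqrt (1 - a) • ε v)‖ ≤ L * ‖u - v‖)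
    (hy : Real.sqrt a • y + Real.sqrt (1 - a) • ε y =
      Real.sqrt a • (x + δ) + Real.sqrt (1 - a) • ε (x + δ)) :
    ‖x - y‖ ≥ (Real.sqrt (1 - a) * Q - Real.sqrt a * ‖δ‖) / L :=
  stmt4_general ε x δ y Q a L hL hsep hLip hy
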